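/- Let k be a commutative ring and (L,∘) a pre-Lie algebra over k. Let c : L → List L → L be the inductively defined extension of ∘, and define X⟨Y_1,…,Y_n⟩ := c X [Y_1,…,Y_n]. Then these operations form a symmetric brace algebra structure on L: they are k-linear in each argument, invariant under all permutations of Y_1,…,Y_n, satisfy X⟨⟩ = X, and satisfy the symmetric brace identity X⟨Y_1,…,Y_n⟩⟨A_1,…,A_m⟩ = Σ_f X⟨Y_1⟨A_{f⁻¹(1)}⟩, …, Y_n⟨A_{f⁻¹(n)}⟩, A_{f⁻¹(n+1)}⟩, the sum ranging over all maps f : {1,…,m} → {1,…,n+1}. -/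

import Mathlib

/-- The list of arguments `A_j` for `j ∈ f⁻¹(i)`, in increasing order of `j`. -/
def fiberList {V : Type*} {m n : ℕ} (Aa : Fin m → V) (f : Fin m → Fin n) (i : Fin n) :
    List V :=
  ((List.finRange m).filter fun j => f j = i).map Aa

/-- A symmetric brace algebra over `k`: a `k`-module `V` with operations
`(X, Y_1, …, Y_n) ↦ X⟨Y_1, …, Y_n⟩` (encoded as `br : V → List V → V`), `k`-linear in each
argument, invariant under permutations of the `Y`'s, with `X⟨⟩ = X`, satisfying the symmetric
brace identity
`X⟨Y_1,…,Y_n⟩⟨A_1,…,A_m⟩ = Σ_f X⟨Y_1⟨A_{f⁻¹(1)}⟩, …, Y_n⟨A_{f⁻¹(n)}⟩, A_{f⁻¹(n+1)}⟩`,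
the sum ranging over all maps `f : {1,…,m} → {1,…,n+1}`, where the entries of `A_{f⁻¹(n+1)}`
are appended as additional separate arguments of the outer brace. -/
structure SymBrace (k V : Type*) [CommRing k] [AddCommGroup V] [Module k V] where
  br : V → List V → V
  br_nil : ∀ X : V, br X [] = X
  br_perm : ∀ (X : V) (A A' : List V), A.Perm A' → br X A = br X A'
  br_linear_left : ∀ A : List V, IsLinearMap k fun X : V => br X A
  br_linear_arg : ∀ (X : V) (A B : List V) (a b : k) (Y Z : V),
    br X (A ++ (a • Y + b • Z) :: B) = a • br X (A ++ Y :: B) + b • br X (A ++ Z :: B)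
  br_identity : ∀ (X : V) {n m : ℕ} (Y : Fin n → V) (Aa : Fin m → V),
    br (br X (List.ofFn Y)) (List.ofFn Aa) =
      ∑ f : Fin m → Fin (n + 1),
        br X ((List.ofFn fun i : Fin n =>
          br (Y i) (fiberList Aa f i.castSucc)) ++ fiberList Aa f (Fin.last n))

namespace PreLieExt

variable {L : Type*} [AddCommGroup L]

/-- Auxiliary version of the extension `c`, processing the list from the head
(i.e. taking the list in reversed order). -/
def cRev (circ : L → L → L) : L → List L → L
  | T, [] => T
  | T, X :: R =>
      circ (cRev circ T R) X -
        (((List.finRange R.length).map fun i => R.set i.1 (circ (R.get i) X)).attach.map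
          fun l => cRev circ T l.1).sum
  termination_by T R => R.length
  decreasing_by
  · simp
  · obtain ⟨i, -, h⟩ := List.mem_map.mp l.2
    rw [← h]
    simp

/-- The inductively defined extension `c : L → List L → L` of a binary product `∘` on `L`:
`c T [] = T`, and
`c T (A ++ [X]) = (c T A) ∘ X - Σ_{i=1}^{n} c T [X_1, …, X_{i-1}, X_i ∘ X, X_{i+1}, …, X_n]`
for `A = [X_1, …, X_n]`.  (This is the operation `T ∘ X_1 ⋯ X_n` of the paper; it is
implemented by recursion on the reversed list.) -/
def c (circ : L → L → L) (T : L) (A : List L) : L :=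
  cRev circ T A.reverse

end PreLieExt

/-!
On the reversed list the recursion reads `T⟨X, R⟩ = T⟨R⟩ ∘ X - Σᵢ T⟨R[Rᵢ ↦ Rᵢ ∘ X]⟩`: right
multiplication by `X` acts on `T⟨R⟩` as a derivation, up to the new argument `X`. Multilinearity
follows by induction on the length. For symmetry it suffices to exchange the two head arguments
`U`, `W`. Expanding twice writes `T⟨U, W, R⟩` as terms visibly symmetric in `U`, `W` (among them
those modifying two entries of `R`) plus the associators `T⟨R⟩ ∘ (W ∘ U) - (T⟨R⟩ ∘ W) ∘ U` and,
inside the `i`-th slot, `Rᵢ ∘ (W ∘ U) - (Rᵢ ∘ W) ∘ U`, which the pre-Lie identity makes symmetric.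
Hence `c T A = cRev T A.reverse = cRev T A`. The brace identity follows by induction on the number
of outer arguments: peeling off `A₁` and applying the derivation rule to
`X⟨Y₁⟨β₁⟩, …, Yₙ⟨βₙ⟩, β_{n+1}⟩`, whose arguments are themselves braces, distributes `A₁` over the
`n + 1` slots.
-/

namespace PreLieExt

section Lists

variable {α : Type*}

theorem induction_on_length {P : List α → Prop} (nil : P [])
    (cons : ∀ a l, (∀ l' : List α, l'.length = l.length → P l') → P (a :: l)) (l : List α) :
    P l := by
  induction hn : l.length generalizing l with
  | zero => rwa [List.length_eq_zero_iff.mp hn]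
  | succ n ih =>
    obtain ⟨a, l, rfl⟩ := List.exists_cons_of_length_eq_add_one hn
    exact cons a l fun l' hl' => ih l' (by simp_all)

def modifications (h : α → α) : List α → List (List α)
  | [] => []
  | a :: l => (h a :: l) :: (modifications h l).map (a :: ·)

@[simp]
theorem modifications_nil (h : α → α) : modifications h [] = [] := rfl

@[simp]
theorem modifications_cons (h : α → α) (a : α) (l : List α) :
    modifications h (a :: l) = (h a :: l) :: (modifications h l).map (a :: ·) := rfl

theorem length_of_mem_modifications {h : α → α} {l m : List α}
    (hm : m ∈ modifications h l) : m.length = l.length := by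
  induction l generalizing m with
  | nil => simp at hm
  | cons a l ih =>
    rcases List.mem_cons.mp hm with rfl | hm
    · rfl
    · obtain ⟨m', hm', rfl⟩ := List.mem_map.mp hm
      simp [ih hm']

theorem modifications_append (h : α → α) (l₁ l₂ : List α) :
    modifications h (l₁ ++ l₂) =
      (modifications h l₁).map (· ++ l₂) ++ (modifications h l₂).map (l₁ ++ ·) := by
  induction l₁ with
  | nil => simp
  | cons a l ih => simp [ih, Function.comp_def]

theorem map_finRange_set_eq_modifications (h : α → α) (l : List α) :
    (List.finRange l.length).map (fun i => l.set i.1 (h (l.get i))) = modifications h l := by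
  induction l with
  | nil => simp
  | cons a l ih => simp [List.finRange_succ, ← ih, Function.comp_def]

theorem modifications_map {ι : Type*} [DecidableEq ι] (h : α → α) (B : ι → α) {s : List ι}
    (hs : s.Nodup) :
    modifications h (s.map B) = s.map fun i => s.map (Function.update B i (h (B i))) := by
  induction s with
  | nil => rfl
  | cons i s ih =>
    obtain ⟨his, hs⟩ := List.nodup_cons.mp hs
    have hfix : ∀ y, s.map (Function.update B i y) = s.map B := fun y =>
      List.map_congr_left fun j hj => Function.update_of_ne (by rintro rfl; exact his hj) _ _
    have hne : ∀ j ∈ s, B i = Function.update B j (h (B j)) i := fun j hj =>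
      (Function.update_of_ne (by rintro rfl; exact his hj) _ _).symm
    simpa [ih hs, Function.comp_def, hfix] using hne

theorem modifications_ofFn {n : ℕ} (h : α → α) (B : Fin n → α) :
    modifications h (List.ofFn B) =
      List.ofFn fun i => List.ofFn (Function.update B i (h (B i))) := by
  simp only [List.ofFn_eq_map, modifications_map h B (List.nodup_finRange n)]

theorem ofFn_update_eq_set {n : ℕ} (B : Fin n → α) (i : Fin n) (a : α) :
    List.ofFn (Function.update B i a) = (List.ofFn B).set i a := by
  refine List.ext_getElem (by simp) fun j _ _ => ?_
  simp [List.getElem_set, Function.update_apply, Fin.ext_iff, eq_comm]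

section Sums

variable {M : Type*} [AddCommMonoid M]

theorem sum_modifications_perm {h : α → α} {F : List α → M} {l l' : List α} (hl : l.Perm l')
    (hF : ∀ t t' : List α, t.Perm t' → t.length = l.length → F t = F t') :
    ((modifications h l).map F).sum = ((modifications h l').map F).sum := by
  induction hl generalizing F with
  | nil => rfl
  | cons a hl ih =>
    simp only [modifications_cons, List.map_cons, List.sum_cons, List.map_map,
      Function.comp_def]
    rw [hF _ _ (hl.cons (h a)) rfl,
      ih (F := fun t => F (a :: t)) fun t t' ht hlen => hF _ _ (ht.cons a) (by simp [hlen])]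
  | swap a b l =>
    simp only [modifications_cons, List.map_cons, List.sum_cons, List.map_map,
      Function.comp_def]
    rw [hF (h b :: a :: l) _ (.swap _ _ _) rfl, hF (b :: h a :: l) _ (.swap _ _ _) rfl,
      List.map_congr_left fun m hm =>
        hF (b :: a :: m) _ (.swap _ _ _) (by simp [length_of_mem_modifications hm])]
    exact add_left_comm _ _ _
  | trans h₁₂ _ ih₁₂ ih₂₃ =>
    exact (ih₁₂ hF).trans (ih₂₃ fun t t' ht hlen => hF t t' ht (hlen.trans h₁₂.length_eq.symm))

theorem sum_modifications_comp_add_comm {G : Type*} [AddCommGroup G] (h h' : α → α)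
    (F : List α → G) (l : List α) :
    ((modifications h l).map fun m => ((modifications h' m).map F).sum).sum +
        ((modifications (h ∘ h') l).map F).sum =
      ((modifications h' l).map fun m => ((modifications h m).map F).sum).sum +
        ((modifications (h' ∘ h) l).map F).sum := by
  induction l generalizing F with
  | nil => rfl
  | cons a l ih =>
    have := ih (fun t => F (a :: t))
    simp only [modifications_cons, List.map_cons, List.sum_cons, List.map_map,
      Function.comp_def, List.sum_map_add] at this ⊢
    linear_combination (norm := abel) this

theorem sum_modifications_eq_smul_add_smul {k : Type*} [Semiring k] [Module k M] (c₁ c₂ : k)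
    {h h₁ h₂ : α → α} {F : List α → M} {l : List α}
    (hF : ∀ l₁ a l₂, l₁ ++ a :: l₂ = l →
      F (l₁ ++ h a :: l₂) = c₁ • F (l₁ ++ h₁ a :: l₂) + c₂ • F (l₁ ++ h₂ a :: l₂)) :
    ((modifications h l).map F).sum =
      c₁ • ((modifications h₁ l).map F).sum + c₂ • ((modifications h₂ l).map F).sum := by
  induction l generalizing F with
  | nil => simp
  | cons a l ih =>
    simp only [modifications_cons, List.map_cons, List.sum_cons, List.map_map,
      Function.comp_def, smul_add]
    rw [show F (h a :: l) = c₁ • F (h₁ a :: l) + c₂ • F (h₂ a :: l) from hF [] a l rfl,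
      ih (F := fun t => F (a :: t)) fun l₁ b l₂ hl => hF (a :: l₁) b l₂ (by simp [hl])]
    abel

theorem sum_modifications_ofFn_append {n : ℕ} (h : α → α) (B : Fin n → α) (o : List α)
    (G : List α → M) :
    ((modifications h (List.ofFn B)).map fun m => G (m ++ o)).sum =
      ∑ j : Fin n, G ((List.ofFn B ++ o).set j (h (B j))) := by
  rw [modifications_ofFn, List.map_ofFn, List.sum_ofFn]
  refine Finset.sum_congr rfl fun j _ => ?_
  simp [ofFn_update_eq_set, List.set_append_left]

end Sums

end Lists

section Fibers

variable {V : Type*} {m n : ℕ}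

theorem fiberList_update (Aa : Fin m → V) (f : Fin m → Fin n) (i : Fin m) (y : V) :
    fiberList (Function.update Aa i y) f =
      Function.update (fiberList Aa f) (f i)
        (((List.finRange m).filter fun j => f j = f i).map (Function.update Aa i y)) := by
  funext l
  rcases eq_or_ne l (f i) with rfl | hl
  · rw [Function.update_self]; rfl
  · rw [Function.update_of_ne hl]
    refine List.map_congr_left fun j hj => Function.update_of_ne ?_ _ _
    rintro rfl
    simp only [List.mem_filter, decide_eq_true_eq] at hj
    exact hl hj.2.symm

theorem fiberList_cons (Aa : Fin (m + 1) → V) (v : Fin n) (g : Fin m → Fin n) :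
    fiberList Aa (Fin.cons v g) =
      Function.update (fiberList (Fin.tail Aa) g) v (Aa 0 :: fiberList (Fin.tail Aa) g v) := by
  funext l
  rcases eq_or_ne l v with rfl | hl
  · simp [fiberList, List.finRange_succ, List.filter_map, Function.comp_def, Fin.tail]
  · simp [fiberList, List.finRange_succ, List.filter_map, Function.comp_def, Fin.tail, hl,
      Ne.symm hl]

theorem sum_fiberList_update {M : Type*} [AddCommMonoid M] (h : V → V) (Aa : Fin m → V)
    (f : Fin m → Fin n) (Φ : (Fin n → List V) → M) :
    ∑ i, Φ (fiberList (Function.update Aa i (h (Aa i))) f) =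
      ∑ l, ((modifications h (fiberList Aa f l)).map
        fun t => Φ (Function.update (fiberList Aa f) l t)).sum := by
  rw [← Finset.sum_fiberwise Finset.univ f]
  refine Finset.sum_congr rfl fun l _ => ?_
  set s := (List.finRange m).filter fun j => f j = l
  have hs : s.Nodup := (List.nodup_finRange m).filter _
  have hfiber : Finset.univ.filter (fun i => f i = l) = s.toFinset := by ext; simp [s]
  rw [hfiber, List.sum_toFinset _ hs, fiberList, modifications_map h Aa hs, List.map_map]
  refine congrArg List.sum (List.map_congr_left fun i hi => ?_)
  obtain rfl : f i = l := by simpa [s] using hi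
  simp [fiberList_update, s]

end Fibers

section Extension

variable {L : Type*} [AddCommGroup L] (circ : L → L → L)

theorem cRev_nil (T : L) : cRev circ T [] = T := by
  rw [cRev]

theorem cRev_cons (T X : L) (R : List L) :
    cRev circ T (X :: R) =
      circ (cRev circ T R) X - ((modifications (circ · X) R).map (cRev circ T)).sum := by
  rw [cRev, List.attach_map_val, map_finRange_set_eq_modifications (circ · X) R]

end Extension

section Bilinear

variable {k L : Type*} [CommRing k] [AddCommGroup L] [Module k L] (circ : L →ₗ[k] L →ₗ[k] L)

def IsRightPreLie : Prop :=
  ∀ X Y Z : L, circ X (circ Y Z) - circ (circ X Y) Z = circ X (circ Z Y) - circ (circ X Z) Y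

theorem circ_cRev (T X : L) (R : List L) :
    circ (cRev (circ · ·) T R) X =
      cRev (circ · ·) T (X :: R) +
        ((modifications (circ · X) R).map (cRev (circ · ·) T)).sum := by
  rw [cRev_cons, sub_add_cancel]

theorem cRev_smul_add_smul_left (a b : k) (T T' : L) (R : List L) :
    cRev (circ · ·) (a • T + b • T') R =
      a • cRev (circ · ·) T R + b • cRev (circ · ·) T' R := by
  induction R using induction_on_length with
  | nil => simp only [cRev_nil]
  | cons X R ih =>
    rw [cRev_cons, cRev_cons, cRev_cons, ih R rfl,
      List.map_congr_left fun m hm => ih m (length_of_mem_modifications hm)]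
    simp only [map_add, map_smul, LinearMap.add_apply, LinearMap.smul_apply, List.sum_map_add,
      List.smul_sum, List.map_map, Function.comp_def, smul_sub]
    abel

theorem isLinearMap_cRev_left (R : List L) : IsLinearMap k fun T => cRev (circ · ·) T R where
  map_add T T' := by simpa using cRev_smul_add_smul_left circ 1 1 T T' R
  map_smul a T := by simpa using cRev_smul_add_smul_left circ a 0 T 0 R

theorem cRev_append_cons_smul_add_smul (T : L) (l₁ l₂ : List L) (a b : k) (y z : L) :
    cRev (circ · ·) T (l₁ ++ (a • y + b • z) :: l₂) =
      a • cRev (circ · ·) T (l₁ ++ y :: l₂) + b • cRev (circ · ·) T (l₁ ++ z :: l₂) := by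
  suffices ∀ R : List L, ∀ l₁ v l₂, l₁ ++ v :: l₂ = R → ∀ (a b : k) (y z : L),
      cRev (circ · ·) T (l₁ ++ (a • y + b • z) :: l₂) =
        a • cRev (circ · ·) T (l₁ ++ y :: l₂) + b • cRev (circ · ·) T (l₁ ++ z :: l₂) from
    this _ l₁ y l₂ rfl a b y z
  intro R
  induction R using induction_on_length with
  | nil => simp
  | cons X R ih =>
    intro l₁ v l₂ hR a b y z
    cases l₁ with
    | nil =>
      obtain ⟨-, rfl⟩ : v = X ∧ l₂ = R := by simpa using hR
      have hsum := sum_modifications_eq_smul_add_smul a b (h := (circ · (a • y + b • z)))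
        (h₁ := (circ · y)) (h₂ := (circ · z)) (F := cRev (circ · ·) T) (l := l₂)
        fun l₁ e l₂ he => by
          simp only [map_add, map_smul]
          exact ih _ (congrArg List.length he) l₁ e l₂ rfl a b _ _
      rw [List.nil_append, cRev_cons, hsum]
      simp only [List.nil_append, cRev_cons, map_add, map_smul, smul_sub]
      abel
    | cons X' l₁ =>
      obtain ⟨rfl, rfl⟩ : X' = X ∧ l₁ ++ v :: l₂ = R := by simpa using hR
      simp only [List.cons_append, cRev_cons, modifications_append, modifications_cons,
        List.map_append, List.sum_append, List.map_cons, List.sum_cons, List.map_map,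
        Function.comp_def]
      rw [ih _ rfl l₁ v l₂ rfl a b y z,
        List.map_congr_left fun m hm => ih (m ++ v :: l₂)
          (by simp [length_of_mem_modifications hm]) m v l₂ rfl a b y z,
        List.map_congr_left fun t ht => ih (l₁ ++ v :: t)
          (by simp [length_of_mem_modifications ht]) l₁ v t rfl a b y z]
      simp only [map_add, map_smul, LinearMap.add_apply, LinearMap.smul_apply]
      rw [ih _ (by simp) l₁ v l₂ rfl a b _ _]
      simp only [List.sum_map_add, List.smul_sum, List.map_map, Function.comp_def, smul_sub,
        smul_add]
      abel

theorem cRev_cons_cons (T U W : L) (R : List L) :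
    cRev (circ · ·) T (U :: W :: R) =
      circ (circ (cRev (circ · ·) T R) W) U - circ (cRev (circ · ·) T R) (circ W U) -
        ((modifications (circ · W) R).map fun m => circ (cRev (circ · ·) T m) U).sum -
        ((modifications (circ · U) R).map fun m => circ (cRev (circ · ·) T m) W).sum +
        (((modifications (circ · (circ W U)) R).map (cRev (circ · ·) T)).sum +
          ((modifications (circ · U) R).map fun m =>
            ((modifications (circ · W) m).map (cRev (circ · ·) T)).sum).sum) := by
  have hsum : ∀ l : List L, circ l.sum U = (l.map (circ · U)).sum := fun l =>
    (map_list_sum (circ.flip U) l).trans rfl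
  have hsub : ∀ (l : List (List L)) (f g : List L → L),
      (l.map fun m => f m - g m).sum = (l.map f).sum - (l.map g).sum := fun l f g => by
    induction l with
    | nil => simp
    | cons m l ih => simp only [List.map_cons, List.sum_cons, ih]; abel
  simp only [cRev_cons, modifications_cons, List.map_cons, List.sum_cons, List.map_map,
    Function.comp_def, map_sub, LinearMap.sub_apply, hsum, hsub]
  abel

theorem cRev_swap (hpl : IsRightPreLie circ) (T U W : L) (R : List L) :
    cRev (circ · ·) T (U :: W :: R) = cRev (circ · ·) T (W :: U :: R) := by
  rw [cRev_cons_cons, cRev_cons_cons]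
  set F := cRev (circ · ·) T
  have hadd : ∀ h₁ h₂ : L → L,
      ((modifications h₁ R).map F).sum + ((modifications h₂ R).map F).sum =
        ((modifications (h₁ + h₂) R).map F).sum := fun h₁ h₂ => by
    rw [sum_modifications_eq_smul_add_smul (1 : k) 1 (h := h₁ + h₂) (h₁ := h₁) (h₂ := h₂)
      fun l₁ a l₂ _ => ?_, one_smul, one_smul]
    simpa using cRev_append_cons_smul_add_smul circ T l₁ l₂ 1 1 (h₁ a) (h₂ a)
  have hpl' : (fun x => circ x (circ W U)) + (fun x => circ (circ x U) W) =
      (fun x => circ x (circ U W)) + (fun x => circ (circ x W) U) := by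
    funext x
    simpa [sub_eq_sub_iff_add_eq_add] using hpl x W U
  have hcomp := sum_modifications_comp_add_comm (circ · U) (circ · W) F R
  simp only [Function.comp_def] at hcomp
  have hAB := hadd (fun x => circ x (circ W U)) (fun x => circ (circ x U) W)
  rw [hpl', ← hadd] at hAB
  linear_combination (norm := abel) hAB + hcomp - hpl (F R) W U

theorem cRev_perm (hpl : IsRightPreLie circ) (T : L) {R R' : List L} (hR : R.Perm R') :
    cRev (circ · ·) T R = cRev (circ · ·) T R' := by
  induction R using induction_on_length generalizing R' with
  | nil => rw [hR.nil_eq]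
  | cons a l ih =>
    have hcons : ∀ (x : L) {l₁ l₂ : List L}, l₁.length = l.length → l₁.Perm l₂ →
        cRev (circ · ·) T (x :: l₁) = cRev (circ · ·) T (x :: l₂) := fun x l₁ l₂ hlen hl => by
      rw [cRev_cons, cRev_cons, ih l₁ hlen hl, sum_modifications_perm hl
        fun t t' ht htlen => ih t (htlen.trans hlen) ht]
    classical
    obtain ⟨b, l', rfl⟩ : ∃ b l', R' = b :: l' :=
      List.exists_cons_of_ne_nil fun h => List.cons_ne_nil a l (h ▸ hR).eq_nil
    rcases eq_or_ne a b with rfl | hab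
    · exact hcons a rfl hR.cons_inv
    have hb : b ∈ l := (List.mem_cons.mp (hR.symm.subset List.mem_cons_self)).resolve_left hab.symm
    have hl : l.Perm (b :: l.erase b) := List.perm_cons_erase hb
    have hl' : (a :: l.erase b).Perm l' := by simpa [hab] using hR.erase b
    rw [hcons a rfl hl, cRev_swap circ hpl, hcons b (by simpa using hl.length_eq.symm) hl']

theorem cRev_set_circ_cRev (T Y x : L) (A : List L) {R : List L} {i : ℕ}
    (hi : i < R.length) :
    cRev (circ · ·) T (R.set i (circ (cRev (circ · ·) Y A) x)) =
      cRev (circ · ·) T (R.set i (cRev (circ · ·) Y (x :: A))) +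
        ((modifications (circ · x) A).map
          fun t => cRev (circ · ·) T (R.set i (cRev (circ · ·) Y t))).sum := by
  have hlin : IsLinearMap k fun w => cRev (circ · ·) T (R.set i w) := by
    simp only [List.set_eq_take_append_cons_drop, if_pos hi]
    exact ⟨fun y z => by simpa using cRev_append_cons_smul_add_smul circ T _ _ 1 1 y z,
      fun a y => by simpa using cRev_append_cons_smul_add_smul circ T _ _ a 0 y 0⟩
  let φ := IsLinearMap.mk' _ hlin
  rw [circ_cRev]
  exact (map_add φ _ _).trans (congrArg _ ((map_list_sum φ _).trans (by rw [List.map_map]; rfl)))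

/-- `X⟨Y₁⟨β₁⟩, …, Yₙ⟨βₙ⟩, β_{n+1}⟩`, the general term of the symmetric brace identity. -/
def nestedBrace (X : L) {n : ℕ} (Y : Fin n → L) (β : Fin (n + 1) → List L) : L :=
  cRev (circ · ·) X
    ((List.ofFn fun j => cRev (circ · ·) (Y j) (β j.castSucc)) ++ β (Fin.last n))

variable {n : ℕ} (X : L) (Y : Fin n → L) (β : Fin (n + 1) → List L)

theorem nestedBrace_update_castSucc (j : Fin n) (t : List L) :
    nestedBrace circ X Y (Function.update β j.castSucc t) =
      cRev (circ · ·) X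
        (((List.ofFn fun j => cRev (circ · ·) (Y j) (β j.castSucc)) ++ β (Fin.last n)).set j
          (cRev (circ · ·) (Y j) t)) := by
  rw [nestedBrace, Function.update_of_ne (Fin.castSucc_lt_last j).ne',
    List.set_append_left _ _ (by simp), ← ofFn_update_eq_set]
  congr 3
  funext i
  rcases eq_or_ne i j with rfl | hij
  · simp
  · simp [hij]

theorem nestedBrace_update_last (t : List L) :
    nestedBrace circ X Y (Function.update β (Fin.last n) t) =
      cRev (circ · ·) X ((List.ofFn fun j => cRev (circ · ·) (Y j) (β j.castSucc)) ++ t) := by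
  simp [nestedBrace]

theorem circ_nestedBrace (hpl : IsRightPreLie circ) (x : L) :
    circ (nestedBrace circ X Y β) x =
      ∑ v, nestedBrace circ X Y (Function.update β v (x :: β v)) +
        ∑ l, ((modifications (circ · x) (β l)).map
          fun t => nestedBrace circ X Y (Function.update β l t)).sum := by
  have hslot (j : Fin n) := cRev_set_circ_cRev circ X (Y j) x (β j.castSucc)
    (R := (List.ofFn fun j => cRev (circ · ·) (Y j) (β j.castSucc)) ++ β (Fin.last n))
    (i := j) (by simp; omega)
  rw [nestedBrace, circ_cRev, modifications_append, List.map_append, List.sum_append,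
    List.map_map, List.map_map, Function.comp_def, Function.comp_def,
    sum_modifications_ofFn_append]
  simp only [Fin.sum_univ_castSucc, nestedBrace_update_castSucc, nestedBrace_update_last, hslot,
    Finset.sum_add_distrib]
  rw [cRev_perm circ hpl X List.perm_middle]
  abel

theorem cRev_brace_identity (hpl : IsRightPreLie circ) {m : ℕ} (Aa : Fin m → L) :
    cRev (circ · ·) (cRev (circ · ·) X (List.ofFn Y)) (List.ofFn Aa) =
      ∑ f : Fin m → Fin (n + 1), nestedBrace circ X Y (fiberList Aa f) := by
  induction m with
  | zero => simp [nestedBrace, fiberList, cRev_nil]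
  | succ m ih =>
    set B := Fin.tail Aa
    calc _ = circ (cRev (circ · ·) (cRev (circ · ·) X (List.ofFn Y)) (List.ofFn B)) (Aa 0) -
          ∑ i, cRev (circ · ·) (cRev (circ · ·) X (List.ofFn Y))
            (List.ofFn (Function.update B i (circ (B i) (Aa 0)))) := by
          rw [List.ofFn_succ, cRev_cons, modifications_ofFn, List.map_ofFn, List.sum_ofFn]; rfl
      _ = ∑ g : Fin m → Fin (n + 1), (circ (nestedBrace circ X Y (fiberList B g)) (Aa 0) -
          ∑ i, nestedBrace circ X Y (fiberList (Function.update B i (circ (B i) (Aa 0))) g)) := by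
          simp only [ih, map_sum, LinearMap.sum_apply, Finset.sum_sub_distrib]
          rw [Finset.sum_comm]
      _ = ∑ g : Fin m → Fin (n + 1), ∑ v, nestedBrace circ X Y (fiberList Aa (Fin.cons v g)) := by
          refine Finset.sum_congr rfl fun g _ => ?_
          rw [sum_fiberList_update (circ · (Aa 0)) B g (nestedBrace circ X Y),
            circ_nestedBrace circ X Y _ hpl, add_sub_cancel_right]
          simp only [fiberList_cons, B]
      _ = _ := by
          rw [Finset.sum_comm, ← Fintype.sum_prod_type']
          exact Fintype.sum_equiv (Fin.consEquiv fun _ => Fin (n + 1)) _ _ fun _ => rfl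

end Bilinear

end PreLieExt

open PreLieExt in
/-- Let `k` be a commutative ring and `(L, ∘)` a pre-Lie algebra over `k`.
Let `c : L → List L → L` be the inductively defined extension of `∘` and define
`X⟨Y_1, …, Y_n⟩ := c X [Y_1, …, Y_n]`.  Then these operations form a symmetric brace algebra
structure on `L`: they are `k`-linear in each argument, invariant under permutations of the
`Y`'s, satisfy `X⟨⟩ = X`, and satisfy the symmetric brace identity. -/
theorem preLie_gives_symBrace
    (k L : Type*) [CommRing k] [AddCommGroup L] [Module k L]
    (circ : L →ₗ[k] L →ₗ[k] L)
    (hpl : ∀ X Y Z : L,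
      circ X (circ Y Z) - circ (circ X Y) Z = circ X (circ Z Y) - circ (circ X Z) Y)
    (br : L → List L → L)
    (hbr : ∀ (X : L) (A : List L), br X A = c (fun a b : L => circ a b) X A) :
    (∀ X : L, br X [] = X) ∧
    (∀ (X : L) (A A' : List L), A.Perm A' → br X A = br X A') ∧
    (∀ A : List L, IsLinearMap k fun X : L => br X A) ∧
    (∀ (X : L) (A B : List L) (a b : k) (Y Z : L),
      br X (A ++ (a • Y + b • Z) :: B) = a • br X (A ++ Y :: B) + b • br X (A ++ Z :: B)) ∧
    (∀ (X : L) {n m : ℕ} (Y : Fin n → L) (Aa : Fin m → L),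
      br (br X (List.ofFn Y)) (List.ofFn Aa) =
        ∑ f : Fin m → Fin (n + 1),
          br X ((List.ofFn fun i : Fin n =>
            br (Y i) (fiberList Aa f i.castSucc)) ++ fiberList Aa f (Fin.last n))) := by
  have hc : ∀ X A, br X A = cRev (circ · ·) X A := fun X A => by
    rw [hbr, c, cRev_perm circ hpl X A.reverse_perm]
  simp only [hc]
  exact ⟨cRev_nil _, fun X _ _ => cRev_perm circ hpl X, isLinearMap_cRev_left circ,
    cRev_append_cons_smul_add_smul circ, fun X _ _ Y Aa => cRev_brace_identity circ X Y hpl Aa⟩
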